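/- In the free group F on generators a₁,…,a_q, let V be a cyclically reduced word of length n ≥ 1 representing a nonpower conjugacy class, and let (i,j), (k,h) be two distinct pairs of indices in {0,…,n-1}² each satisfying the letter conditions i ≠ j, v_i ≠ v_j, v̄_i ≠ v_{j-1} (resp. for (k,h)). Then for any m ≥ 2 and l ≥ 1, the elements of F represented by V_i^m V_{i,j} and V_k^l V_{k,h} lie in different conjugacy classes of F. -/

import Mathlib

/-!
Both words are cyclically reduced (the letter conditions are exactly what makes their two ends
not cancel), so if they were conjugate in `F` one would be a cyclic rotation of the other. They
then have the same length `N = m n + s` with `0 < s < n`. A rotation by `r` cuts the words into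
two windows on which the letter sequence of `V` agrees with a shift of itself; because `V` is not
a proper power, a window of length at least `n` forces that shift to be `≡ 0 mod n`. Since `m ≥ 2`
one of the windows is that long, and the remaining cases give `(i, j) = (k, h)`, `v_i = v_j` or
`v_k = v_h`.
-/

/-- The word `v_i v_{i+1} … v_{i+len-1}` read off from the letter function `v`. -/
def seg {A : Type*} (v : ℕ → A) (i len : ℕ) : List A :=
  (List.range len).map (fun t => v (i + t))

/-- Freely reduced: no letter is followed by its formal inverse. -/
def FRed {A : Type*} (bar : A → A) (w : List A) : Prop :=
  w.Chain' (fun x y => y ≠ bar x)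

/-- Cyclically reduced: every rotation is freely reduced. -/
def CRed {A : Type*} (bar : A → A) (w : List A) : Prop :=
  ∀ r, FRed bar (w.rotate r)

/-- `p`-fold concatenation power of a word. -/
def pw {A : Type*} (w : List A) (m : ℕ) : List A := (List.replicate m w).flatten

/-- `w₂` is a cyclic rotation of `w₁`. -/
def IsRot {A : Type*} (w₁ w₂ : List A) : Prop := ∃ r, w₂ = w₁.rotate r

/-- The cyclic class of `w` is not that of a proper power. -/
def Nonpower {A : Type*} (w : List A) : Prop :=
  ¬ ∃ (u : List A) (p : ℕ), 2 ≤ p ∧ IsRot (pw u p) w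

/-- The formal inverse on the alphabet `{a₁,…,a_q, ā₁,…,ā_q} = Fin q × Bool`. -/
def barF (q : ℕ) : Fin q × Bool → Fin q × Bool := fun x => (x.1, !x.2)

open Function

namespace FreeGroup

variable {α : Type*} {L d w : List (α × Bool)} {x : α × Bool}

theorem IsReduced.invRev (h : IsReduced L) : IsReduced (invRev L) := by
  rw [FreeGroup.invRev, IsReduced, List.isChain_reverse, List.isChain_map]
  exact h.imp fun a b hab hba => by simp_all [eq_comm]

theorem IsCyclicallyReduced.rotate_one (h : IsCyclicallyReduced L) :
    IsCyclicallyReduced (L.rotate 1) := by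
  rcases L with _ | ⟨a, _ | ⟨b, t⟩⟩
  · simp
  · simp
  · obtain ⟨hred, hcyc⟩ := h
    rw [List.rotate_cons_succ, List.rotate_zero, isCyclicallyReduced_cons_append_iff]
    refine ⟨?_, (isReduced_cons_cons.1 hred).1⟩
    rw [IsReduced, List.isChain_append]
    refine ⟨hred.tail, List.isChain_singleton a, fun y hy z hz => ?_⟩
    simp only [List.head?_cons, Option.mem_def, Option.some.injEq] at hz
    subst hz
    exact hcyc y (by simpa using hy) _ rfl

theorem IsCyclicallyReduced.rotate (h : IsCyclicallyReduced L) (r : ℕ) :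
    IsCyclicallyReduced (L.rotate r) := by
  induction r with
  | zero => simpa using h
  | succ r ih => simpa [List.rotate_rotate] using ih.rotate_one

theorem isReduced_pair_iff {a b : α × Bool} : IsReduced [a, b] ↔ b ≠ (a.1, !a.2) := by
  rcases a with ⟨a₁, a₂⟩
  rcases b with ⟨b₁, b₂⟩
  cases a₂ <;> cases b₂ <;> simp [isReduced_cons_cons, eq_comm]

theorem mk_singleton_eq_inv_of_not_isReduced {a b : α × Bool} (h : ¬ IsReduced [a, b]) :
    mk [b] = (mk [a])⁻¹ := by
  rcases a with ⟨a₁, a₂⟩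
  rcases b with ⟨b₁, b₂⟩
  simp only [isReduced_cons_cons, IsReduced.singleton, and_true, Classical.not_imp] at h
  obtain ⟨rfl, hb⟩ := h
  rw [inv_mk]
  simp [FreeGroup.invRev, Bool.eq_not.2 (Ne.symm hb)]

theorem mk_cons_conj_eq (a : α × Bool) (t : List (α × Bool)) :
    (mk [a])⁻¹ * mk (a :: t) * mk [a] = mk (t ++ [a]) := by
  rw [← mul_mk, show mk (a :: t) = mk [a] * mk t from (mul_mk (L₁ := [a])).symm]; group

theorem mk_concat_conj_eq (a : α × Bool) (t : List (α × Bool)) :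
    mk [a] * mk (t ++ [a]) * (mk [a])⁻¹ = mk (a :: t) := by
  rw [← mul_mk, show mk (a :: t) = mk [a] * mk t from (mul_mk (L₁ := [a])).symm]; group

theorem exists_letter_conj_eq_rotate_or_isReduced (hw : IsCyclicallyReduced w)
    (hd : IsReduced (d ++ [x])) :
    (∃ r, mk [x] * mk w * (mk [x])⁻¹ = mk (w.rotate r)) ∨
      IsReduced (d ++ [x] ++ w ++ invRev (d ++ [x])) := by
  rcases w.eq_nil_or_concat' with rfl | ⟨u, y, rfl⟩
  · exact Or.inl ⟨0, by rw [List.rotate_nil, ← one_eq_mk, mul_one, mul_inv_cancel]⟩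
  obtain ⟨a, t, hat⟩ : ∃ a t, u ++ [y] = a :: t := List.exists_cons_of_ne_nil (by simp)
  by_cases hxa : IsReduced [x, a]
  · by_cases hyx : IsReduced [y, (x.1, !x.2)]
    · right
      have hxw : IsReduced (d ++ [x] ++ (u ++ [y])) := by
        refine hd.append_overlap ?_ (List.cons_ne_nil x [])
        rw [List.singleton_append, hat, isReduced_cons_cons]
        exact ⟨(isReduced_cons_cons.1 hxa).1, hat ▸ hw.isReduced⟩
      have hwx : IsReduced (u ++ [y] ++ invRev (d ++ [x])) := by
        have hinv : invRev (d ++ [x]) = [(x.1, !x.2)] ++ invRev d := by simp [invRev]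
        rw [hinv, ← List.append_assoc]
        refine IsReduced.append_overlap ?_ (hinv ▸ hd.invRev) (List.cons_ne_nil _ [])
        exact hw.isReduced.append_overlap hyx (List.cons_ne_nil y [])
      exact hxw.append_overlap hwx (by simp)
    · left
      refine ⟨u.length, ?_⟩
      have hyx' : mk [x] = mk [y] :=
        inv_inj.1 (inv_mk.trans (mk_singleton_eq_inv_of_not_isReduced hyx))
      rw [List.rotate_append_length_eq, hyx']
      exact mk_concat_conj_eq y u
  · left
    refine ⟨1, ?_⟩
    rw [hat, ← inv_inv (mk [x]), ← mk_singleton_eq_inv_of_not_isReduced hxa, inv_inv,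
      List.rotate_cons_succ, List.rotate_zero]
    exact mk_cons_conj_eq a t

theorem exists_isReduced_conj_eq_mk_rotate (hd : IsReduced d) (hw : IsCyclicallyReduced w) :
    ∃ (p : List (α × Bool)) (r : ℕ), IsReduced (p ++ w.rotate r ++ invRev p) ∧
      mk d * mk w * (mk d)⁻¹ = mk (p ++ w.rotate r ++ invRev p) := by
  induction d using List.reverseRecOn generalizing w with
  | nil => exact ⟨[], 0, by simpa using hw.isReduced, by simp [← one_eq_mk]⟩
  | append_singleton d x ih =>
    have hconj : mk (d ++ [x]) * mk w * (mk (d ++ [x]))⁻¹ =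
        mk d * (mk [x] * mk w * (mk [x])⁻¹) * (mk d)⁻¹ := by
      rw [← mul_mk]; group
    rcases exists_letter_conj_eq_rotate_or_isReduced hw hd with ⟨r, hr⟩ | hred
    · obtain ⟨p, r', hp, he⟩ := ih (hd.infix (List.prefix_append d [x]).isInfix) (hw.rotate r)
      rw [List.rotate_rotate] at hp he
      exact ⟨p, r + r', hp, by rw [hconj, hr, he]⟩
    · exact ⟨d ++ [x], 0, by simpa using hred, by simp [mul_mk, inv_mk]⟩

theorem IsCyclicallyReduced.exists_rotate_of_isConj {L₁ L₂ : List (α × Bool)}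
    (h₁ : IsCyclicallyReduced L₁) (h₂ : IsCyclicallyReduced L₂)
    (h : IsConj (mk L₁) (mk L₂)) : ∃ r, L₂ = L₁.rotate r := by
  classical
  obtain ⟨c, hc⟩ := isConj_iff.1 h
  obtain ⟨p, r, hred, he⟩ := exists_isReduced_conj_eq_mk_rotate (isReduced_toWord (x := c)) h₁
  rw [mk_toWord, hc] at he
  have hL₂ : L₂ = p ++ L₁.rotate r ++ invRev p := by
    simpa only [h₂.isReduced.reduce_eq, hred.reduce_eq] using reduce.sound he
  rcases p with _ | ⟨a, p⟩
  · exact ⟨r, by simpa using hL₂⟩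
  · have hshape : a :: p ++ L₁.rotate r ++ invRev (a :: p) =
        a :: (p ++ L₁.rotate r ++ invRev p) ++ [(a.1, !a.2)] := by
      simp [invRev]
    rw [hL₂, hshape, isCyclicallyReduced_cons_append_iff] at h₂
    simpa using h₂.2 rfl

end FreeGroup

section Segments

variable {A : Type*} (v : ℕ → A)

@[simp] theorem length_seg (i L : ℕ) : (seg v i L).length = L := by simp [seg]

theorem seg_add (i a b : ℕ) : seg v i (a + b) = seg v i a ++ seg v (i + a) b := by
  simp only [seg, List.range_add, List.map_append, List.map_map]
  congr 1
  exact List.map_congr_left fun t _ => by simp [Nat.add_assoc]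

theorem seg_eq_seg_iff {a b L : ℕ} :
    seg v a L = seg v b L ↔ ∀ x < L, v (a + x) = v (b + x) := by
  simp [seg, List.map_inj_left]

theorem rotate_seg {i N r : ℕ} (hr : r ≤ N) :
    (seg v i N).rotate r = seg v (i + r) (N - r) ++ seg v i r := by
  conv_lhs => rw [← Nat.add_sub_cancel' hr, seg_add]
  simpa using List.rotate_append_length_eq (seg v i r) (seg v (i + r) (N - r))

variable {v}

theorem Function.Periodic.seg_add_period {p : ℕ} (hv : Periodic v p) (i L : ℕ) :
    seg v (i + p) L = seg v i L :=
  (seg_eq_seg_iff v).2 fun x _ => by rw [Nat.add_right_comm, hv]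

theorem Function.Periodic.pw_seg {n : ℕ} (hv : Periodic v n) (i m : ℕ) :
    pw (seg v i n) m = seg v i (m * n) := by
  induction m with
  | zero => simp [pw, seg]
  | succ m ih =>
    rw [pw, List.replicate_succ, List.flatten_cons, ← pw, ih, Nat.succ_mul, Nat.add_comm,
      seg_add, hv.seg_add_period]

theorem Function.Periodic.pw_seg_append_seg {n : ℕ} (hv : Periodic v n) (i m s : ℕ) :
    pw (seg v i n) m ++ seg v i s = seg v i (m * n + s) := by
  rw [hv.pw_seg, seg_add, (show Periodic v (m * n) by simpa using hv.nat_mul m).seg_add_period]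

theorem Function.Periodic.eq_of_modEq {n a b : ℕ} (hv : Periodic v n) (h : a ≡ b [MOD n]) :
    v a = v b := by
  rw [← hv.map_mod_nat a, ← hv.map_mod_nat b, h]

end Segments

section ReducedSegments

open FreeGroup

variable {α : Type*} {v : ℕ → α × Bool}

theorem isReduced_seg (hred : ∀ t, IsReduced [v t, v (t + 1)]) (i L : ℕ) :
    IsReduced (seg v i L) := by
  rw [FreeGroup.IsReduced, seg, List.isChain_map, List.isChain_range]
  exact fun m _ => (isReduced_cons_cons.1 (hred (i + m))).1

theorem isCyclicallyReduced_seg (hred : ∀ t, IsReduced [v t, v (t + 1)]) {i L : ℕ} (hL : 0 < L)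
    (hjunc : IsReduced [v (i + L - 1), v i]) : IsCyclicallyReduced (seg v i L) := by
  refine ⟨isReduced_seg hred i L, fun a ha b hb => ?_⟩
  obtain ⟨L, rfl⟩ := Nat.exists_eq_add_one_of_ne_zero hL.ne'
  simp [seg, List.getLast?_range, List.head?_range] at ha hb
  subst ha hb
  simpa [isReduced_cons_cons] using hjunc

theorem Function.Periodic.isCyclicallyReduced_seg {n i j L : ℕ} (hv : Periodic v n)
    (hn : 0 < n) (hred : ∀ t, IsReduced [v t, v (t + 1)]) (hL : 0 < L) (hij : i + L ≡ j [MOD n])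
    (hjunc : IsReduced [v (j + n - 1), v i]) : IsCyclicallyReduced (seg v i L) := by
  have hlast : i + L - 1 ≡ j + n - 1 [MOD n] := by
    refine Nat.ModEq.add_right_cancel' 1 ?_
    rw [Nat.sub_add_cancel (by omega), Nat.sub_add_cancel (by omega)]
    exact hij.trans Nat.add_modEq_right.symm
  exact _root_.isCyclicallyReduced_seg hred hL (by rwa [hv.eq_of_modEq hlast])

end ReducedSegments

section Periods

variable {A : Type*} {v : ℕ → A}

theorem Function.Periodic.gcd {a b : ℕ} (ha : Periodic v a) (hb : Periodic v b) :
    Periodic v (a.gcd b) := by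
  induction a, b using Nat.gcd.induction with
  | H0 b => simpa using hb
  | H1 a b ha0 ih =>
    rw [Nat.gcd_rec]
    refine ih (fun x => ?_) ha
    have hq : Periodic v (b / a * a) := by simpa using ha.nat_mul (b / a)
    rw [← hq, Nat.add_assoc, Nat.mod_add_div' b a, hb]

theorem Nonpower.dvd_of_periodic {n c : ℕ} (hnp : Nonpower (seg v 0 n)) (hn : 0 < n)
    (hv : Periodic v n) (hc : Periodic v c) : n ∣ c := by
  set g := c.gcd n
  have hg : 0 < g := Nat.gcd_pos_of_pos_right c hn
  have hgn : n / g * g = n := Nat.div_mul_cancel (Nat.gcd_dvd_right c n)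
  suffices g = n from this ▸ Nat.gcd_dvd_left c n
  by_contra hne
  have hg_lt : g < n := lt_of_le_of_ne (Nat.le_of_dvd hn (Nat.gcd_dvd_right c n)) hne
  refine hnp ⟨seg v 0 g, n / g, ?_, 0, ?_⟩
  · by_contra hlt
    have : n / g * g ≤ 1 * g := Nat.mul_le_mul_right g (by omega)
    omega
  · rw [List.rotate_zero, (hc.gcd hv).pw_seg, hgn]

theorem Nonpower.modEq_of_seg_eq {n L a b : ℕ} (hnp : Nonpower (seg v 0 n)) (hn : 0 < n)
    (hv : Periodic v n) (hL : n ≤ L) (h : seg v a L = seg v b L) : a ≡ b [MOD n] := by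
  have hwin : ∀ x, v (a + x) = v (b + x) := by
    intro x
    have hx := (seg_eq_seg_iff v).1 h (x % n) ((Nat.mod_lt x hn).trans_le hL)
    have hq : Periodic v (x / n * n) := by simpa using hv.nat_mul (x / n)
    rw [← Nat.mod_add_div' x n, ← Nat.add_assoc, hq, ← Nat.add_assoc, hq, hx]
  wlog hab : a ≤ b generalizing a b
  · exact (this h.symm (fun x => (hwin x).symm) (by omega)).symm
  have han : a ≤ a * n := Nat.le_mul_of_pos_right a hn
  have hq : Periodic v (a * n) := by simpa using hv.nat_mul a
  have hper : Periodic v (b - a) := fun z =>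
    calc v (z + (b - a)) = v (b + (z + a * n - a)) := by rw [← hq]; congr 1; omega
      _ = v (a + (z + a * n - a)) := (hwin _).symm
      _ = v z := by rw [show a + (z + a * n - a) = z + a * n by omega, hq]
  exact (Nat.modEq_iff_dvd' hab).2 (hnp.dvd_of_periodic hn hv hper)

theorem Nonpower.modEq_or_eq_of_seg_eq_rotate_of_add_le {n N i k r : ℕ}
    (hnp : Nonpower (seg v 0 n)) (hn : 0 < n) (hv : Periodic v n) (hN : ¬ n ∣ N)
    (hrot : seg v k N = (seg v i N).rotate r) (hr : r + n ≤ N) :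
    k ≡ i [MOD n] ∨ v (i + N) = v i := by
  have hsplit : seg v k N = seg v k (N - r) ++ seg v (k + (N - r)) r := by
    rw [← seg_add, Nat.sub_add_cancel (by omega)]
  rw [rotate_seg v (by omega), hsplit] at hrot
  obtain ⟨hA, hB⟩ := List.append_inj hrot (by simp)
  have hkA : k ≡ i + r [MOD n] := hnp.modEq_of_seg_eq hn hv (by omega) hA
  have hshift : k + (N - r) ≡ i + N [MOD n] := by
    simpa [show i + r + (N - r) = i + N by omega] using hkA.add_right (N - r)
  rcases Nat.eq_zero_or_pos r with rfl | hr0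
  · exact Or.inl hkA
  rcases lt_or_ge r n with hrn | hrn
  · right
    rw [← hv.eq_of_modEq hshift]
    simpa using (seg_eq_seg_iff v).1 hB 0 hr0
  · have hB' : k + (N - r) ≡ i [MOD n] := hnp.modEq_of_seg_eq hn hv hrn hB
    exact absurd (Nat.modEq_zero_iff_dvd.1 (Nat.ModEq.add_left_cancel' i
      (by simpa using hshift.symm.trans hB'))) hN

theorem Nonpower.modEq_or_eq_of_seg_eq_rotate {n N i k r : ℕ} (hnp : Nonpower (seg v 0 n))
    (hn : 0 < n) (hv : Periodic v n) (hN : ¬ n ∣ N) (h2n : 2 * n ≤ N)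
    (hrot : seg v k N = (seg v i N).rotate r) :
    k ≡ i [MOD n] ∨ v (i + N) = v i ∨ v (k + N) = v k := by
  have hN0 : 0 < N := by omega
  rw [← List.rotate_mod, length_seg] at hrot
  have hr : r % N < N := Nat.mod_lt r hN0
  rcases le_or_gt (r % N + n) N with hle | hgt
  · exact (hnp.modEq_or_eq_of_seg_eq_rotate_of_add_le hn hv hN hrot hle).imp_right Or.inl
  · have hback : seg v i N = (seg v k N).rotate (N - r % N) := by
      rw [hrot, List.rotate_rotate, Nat.add_sub_cancel' hr.le]
      simpa using (List.rotate_length (seg v i N)).symm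
    exact ((hnp.modEq_or_eq_of_seg_eq_rotate_of_add_le hn hv hN hback (by omega)).imp Nat.ModEq.symm
      Or.inr)

end Periods

theorem add_mod_sub_modEq {n i j : ℕ} (hi : i < n) : i + (j + n - i) % n ≡ j [MOD n] :=
  calc i + (j + n - i) % n ≡ i + (j + n - i) [MOD n] := (Nat.mod_modEq _ n).add_left i
    _ = j + n := by omega
    _ ≡ j [MOD n] := Nat.add_modEq_right

theorem modEq_add_mul_add {n i j s : ℕ} (h : i + s ≡ j [MOD n]) (c : ℕ) :
    i + (c * n + s) ≡ j [MOD n] := by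
  rw [show i + (c * n + s) = i + s + c * n by ring]
  exact (Nat.add_mul_mod_self_right (i + s) c n).trans h

theorem isCyclicallyReduced_seg_mul_add {q n i j s : ℕ} {v : ℕ → Fin q × Bool}
    (hv : Periodic v n) (hn : 0 < n) (hred : ∀ t, v (t + 1) ≠ barF q (v t)) (hs0 : 0 < s)
    (hs : i + s ≡ j [MOD n]) (hjunc : barF q (v i) ≠ v (j + n - 1)) (c : ℕ) :
    FreeGroup.IsCyclicallyReduced (seg v i (c * n + s)) :=
  hv.isCyclicallyReduced_seg hn (fun t => FreeGroup.isReduced_pair_iff.2 (hred t)) (by omega)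
    (modEq_add_mul_add hs c) (FreeGroup.isReduced_pair_iff.2 fun he => hjunc (by simp [he, barF]))

theorem stmt12_general (q : ℕ) (v : ℕ → Fin q × Bool) (n : ℕ)
    (hper : ∀ t, v (t + n) = v t)
    (hred : ∀ t, v (t + 1) ≠ barF q (v t))
    (hnp : Nonpower (seg v 0 n))
    (i j k h : ℕ) (hi : i < n) (hj : j < n) (hk : k < n) (hh : h < n)
    (h1 : v i ≠ v j) (h2 : barF q (v i) ≠ v (j + n - 1))
    (h3 : v k ≠ v h) (h4 : barF q (v k) ≠ v (h + n - 1))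
    (hne : (i, j) ≠ (k, h))
    (m l : ℕ) (hm : 2 ≤ m) :
    ¬ IsConj (FreeGroup.mk (pw (seg v i n) m ++ seg v i ((j + n - i) % n)))
             (FreeGroup.mk (pw (seg v k n) l ++ seg v k ((h + n - k) % n))) := by
  have hn : 0 < n := by omega
  have hv : Periodic v n := hper
  set s := (j + n - i) % n
  set t := (h + n - k) % n
  have hs : i + s ≡ j [MOD n] := add_mod_sub_modEq hi
  have ht : k + t ≡ h [MOD n] := add_mod_sub_modEq hk
  have hs0 : 0 < s := Nat.pos_of_ne_zero fun h0 => h1 (hv.eq_of_modEq (by simpa [h0] using hs))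
  have ht0 : 0 < t := Nat.pos_of_ne_zero fun h0 => h3 (hv.eq_of_modEq (by simpa [h0] using ht))
  rw [hv.pw_seg_append_seg, hv.pw_seg_append_seg]
  intro hconj
  have hW₁ := isCyclicallyReduced_seg_mul_add hv hn hred hs0 hs h2 m
  have hW₂ := isCyclicallyReduced_seg_mul_add hv hn hred ht0 ht h4 l
  obtain ⟨r, hrot⟩ := hW₁.exists_rotate_of_isConj hW₂ hconj
  have hlen : l * n + t = m * n + s := by simpa using congrArg List.length hrot
  have hts : t = s := by
    have hmod : (l * n + t) % n = (m * n + s) % n := by rw [hlen]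
    rwa [Nat.mul_add_mod_of_lt (Nat.mod_lt _ hn), Nat.mul_add_mod_of_lt (Nat.mod_lt _ hn)] at hmod
  rw [hlen] at hrot
  have hN : ¬ n ∣ m * n + s :=
    (Nat.dvd_add_right (dvd_mul_left n m)).not.2 (Nat.not_dvd_of_pos_of_lt hs0 (Nat.mod_lt _ hn))
  rcases hnp.modEq_or_eq_of_seg_eq_rotate hn hv hN (by nlinarith) hrot with hki | hiN | hkN
  · have hki' : k = i := hki.eq_of_lt_of_lt hk hi
    subst hki'
    exact hne (by rw [(ht.symm.trans (hts ▸ hs)).eq_of_lt_of_lt hh hj])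
  · exact h1 ((hv.eq_of_modEq (modEq_add_mul_add hs m)).symm.trans hiN).symm
  · exact h3 ((hv.eq_of_modEq (modEq_add_mul_add (hts ▸ ht) m)).symm.trans hkN).symm

/-- In the free group `F` on `q` generators, for a cyclically reduced
nonpower word `V` and distinct linked-type pairs `(i,j) ≠ (k,h)`, the elements
represented by `V_i^m V_{i,j}` (with `m ≥ 2`) and `V_k^l V_{k,h}` (with `l ≥ 1`)
lie in different conjugacy classes of `F`. -/
theorem stmt12 (q : ℕ) (v : ℕ → Fin q × Bool) (n : ℕ) (hn : 1 ≤ n)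
    (hper : ∀ t, v (t + n) = v t)
    (hred : ∀ t, v (t + 1) ≠ barF q (v t))
    (hnp : Nonpower (seg v 0 n))
    (i j k h : ℕ) (hi : i < n) (hj : j < n) (hk : k < n) (hh : h < n)
    (hij : i ≠ j) (h1 : v i ≠ v j) (h2 : barF q (v i) ≠ v (j + n - 1))
    (hkh : k ≠ h) (h3 : v k ≠ v h) (h4 : barF q (v k) ≠ v (h + n - 1))
    (hne : (i, j) ≠ (k, h))
    (m l : ℕ) (hm : 2 ≤ m) (hl : 1 ≤ l) :
    ¬ IsConj (FreeGroup.mk (pw (seg v i n) m ++ seg v i ((j + n - i) % n)))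
             (FreeGroup.mk (pw (seg v k n) l ++ seg v k ((h + n - k) % n))) :=
  stmt12_general q v n hper hred hnp i j k h hi hj hk hh h1 h2 h3 h4 hne m l hm
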